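/- arXiv:0808.1354 — 3 statements merged into one kernel-verified Lean document; each statement's English description precedes it below -/
import Mathlib

section
/- Let f : L → L on a complete lattice have right adjoint f*, with f decreasing and weakly idempotent. Define K(l) := f*(l) ∧ l. Then K(l) ≤ K(K(l)) for all l (the positive introspection / axiom 4 for K). -/
/-! Writing `f ⊣ f*`, the inequality `K l ≤ K (K l)` amounts to `K l ≤ f* (K l)`, i.e. to `K l` being
a prefixed point of `f`. Since `K l ≤ f* l`, adjunction gives `f (K l) ≤ l`; weak idempotence then gives
`f (f (K l)) ≤ l`, which by adjunction again is `f (K l) ≤ f* l`. -/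

theorem GaloisConnection.l_le_u_inf_self_of_le_u {α : Type*} [SemilatticeInf α] {f g : α → α}
    (gc : GaloisConnection f g) {a b : α} (hidem : f (f a) ≤ f a) (h : a ≤ g b) :
    f a ≤ g b ⊓ b :=
  have hfa : f a ≤ b := gc.l_le h
  le_inf (gc.le_u (hidem.trans hfa)) hfa

theorem knowledge_positive_introspection_general
    {L : Type*} [CompleteLattice L] (f fs : L → L)
    (hadj : ∀ l l', f l ≤ l' ↔ l ≤ fs l')
    (hidem : ∀ l, f (f l) ≤ f l)
    (K : L → L) (hK : ∀ l, K l = fs l ⊓ l) :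
    ∀ l, K l ≤ K (K l) := by
  intro l
  have gc : GaloisConnection f fs := hadj
  have hfix : f (K l) ≤ K l := by
    rw [hK l]
    exact gc.l_le_u_inf_self_of_le_u (hidem _) inf_le_left
  rw [hK (K l)]
  exact le_inf (gc.le_u hfix) le_rfl

theorem knowledge_positive_introspection
    {L : Type*} [CompleteLattice L] (f fs : L → L)
    (hadj : ∀ l l', f l ≤ l' ↔ l ≤ fs l')
    (hdec : ∀ l, f l ≤ l) (hidem : ∀ l, f (f l) ≤ f l)
    (K : L → L) (hK : ∀ l, K l = fs l ⊓ l) :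
    ∀ l, K l ≤ K (K l) :=
  knowledge_positive_introspection_general f fs hadj hidem K hK
end

section
/- Public announcement lemma: Let L be a complete lattice, f_A ⊣ f_A* and h_a ⊣ h_a* Galois connections with f_A, h_a join-preserving, satisfying f_A(h_a(l)) ≤ h_a(f_A(l)) for all l. Suppose f_A(H) = H ⊔ T, h_a(T) = ⊥, and h_a(H) ≤ H. Then H ≤ h_a*(f_A*(H)). -/
theorem public_announcement_general
    {L : Type*} [CompleteLattice L] (H T : L) (fA fAs ha has : L → L)
    (hadjA : ∀ l l', fA l ≤ l' ↔ l ≤ fAs l')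
    (hadja : ∀ l l', ha l ≤ l' ↔ l ≤ has l')
    (hperm : ∀ l, fA (ha l) ≤ ha (fA l))
    (hAH : fA H = H ⊔ T) (haT : ha T = ⊥) (haH : ha H ≤ H) :
    H ≤ has (fAs H) := by
  have gca : GaloisConnection ha has := hadja
  refine (hadja _ _).mp ((hadjA _ _).mp ?_)
  calc fA (ha H) ≤ ha (fA H) := hperm H
    _ = ha H ⊔ ha T := by rw [hAH, gca.l_sup]
    _ = ha H := by rw [haT, sup_bot_eq]
    _ ≤ H := haH

theorem public_announcement
    {L : Type*} [CompleteLattice L] (H T : L) (fA fAs ha has : L → L)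
    (hfA : ∀ (ι : Type*) (b : ι → L), fA (⨆ i, b i) = ⨆ i, fA (b i))
    (hha : ∀ (ι : Type*) (b : ι → L), ha (⨆ i, b i) = ⨆ i, ha (b i))
    (hadjA : ∀ l l', fA l ≤ l' ↔ l ≤ fAs l')
    (hadja : ∀ l l', ha l ≤ l' ↔ l ≤ has l')
    (hperm : ∀ l, fA (ha l) ≤ ha (fA l))
    (hAH : fA H = H ⊔ T) (haT : ha T = ⊥) (haH : ha H ≤ H) :
    H ≤ has (fAs H) :=
  public_announcement_general H T fA fAs ha has hadjA hadja hperm hAH haT haH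
end

section
/- Lying lemma: Let L be a complete lattice with elements H, T, operators f_A, f_C (agents) and actions a, ā acting by join-preserving maps h_a, h_ā with right adjoints, satisfying f_A(h_ā(l)) ≤ h_a(f_A(l)) and f_C(h_a(l)) ≤ h_a(f_C(l)) for all l (appearance of ā to A is a, and a appears as a to C). Assume f_C(f_A(H)) ≤ H ⊔ T, h_a(T) = ⊥, and h_a(H) ≤ H. Then H ≤ h_ā*(f_A*(f_C*(H))). -/
theorem map_sup_of_map_iSup {α β : Type*} [CompleteLattice α] [CompleteLattice β] {f : α → β}
    (hf : ∀ (ι : Type*) (b : ι → α), f (⨆ i, b i) = ⨆ i, f (b i)) (x y : α) :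
    f (x ⊔ y) = f x ⊔ f y := by
  simpa [iSup_bool_eq] using hf (ULift Bool) fun b => if b.down then x else y

theorem lying_lemma_general
    {L : Type*} [CompleteLattice L] (H T : L)
    (fA fAs fC fCs ha hab habs : L → L)
    (hha : ∀ (ι : Type*) (b : ι → L), ha (⨆ i, b i) = ⨆ i, ha (b i))
    (hadjA : ∀ l l', fA l ≤ l' ↔ l ≤ fAs l')
    (hadjC : ∀ l l', fC l ≤ l' ↔ l ≤ fCs l')
    (hadjab : ∀ l l', hab l ≤ l' ↔ l ≤ habs l')
    (hpermA : ∀ l, fA (hab l) ≤ ha (fA l))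
    (hpermC : ∀ l, fC (ha l) ≤ ha (fC l))
    (hCA : fC (fA H) ≤ H ⊔ T) (haT : ha T = ⊥) (haH : ha H ≤ H) :
    H ≤ habs (fAs (fCs H)) := by
  have gC : GaloisConnection fC fCs := hadjC
  have ha_sup := map_sup_of_map_iSup hha
  have ha_mono := Monotone.of_map_sup ha_sup
  refine ((GaloisConnection.compose hadjab hadjA).compose gC).le_iff_le.mp ?_
  calc fC (fA (hab H)) ≤ fC (ha (fA H)) := gC.monotone_l (hpermA H)
    _ ≤ ha (fC (fA H)) := hpermC _
    _ ≤ ha (H ⊔ T) := ha_mono hCA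
    _ = ha H := by rw [ha_sup, haT, sup_bot_eq]
    _ ≤ H := haH

theorem lying_lemma
    {L : Type*} [CompleteLattice L] (H T : L)
    (fA fAs fC fCs ha has hab habs : L → L)
    (hfA : ∀ (ι : Type*) (b : ι → L), fA (⨆ i, b i) = ⨆ i, fA (b i))
    (hfC : ∀ (ι : Type*) (b : ι → L), fC (⨆ i, b i) = ⨆ i, fC (b i))
    (hha : ∀ (ι : Type*) (b : ι → L), ha (⨆ i, b i) = ⨆ i, ha (b i))
    (hhab : ∀ (ι : Type*) (b : ι → L), hab (⨆ i, b i) = ⨆ i, hab (b i))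
    (hadjA : ∀ l l', fA l ≤ l' ↔ l ≤ fAs l')
    (hadjC : ∀ l l', fC l ≤ l' ↔ l ≤ fCs l')
    (hadja : ∀ l l', ha l ≤ l' ↔ l ≤ has l')
    (hadjab : ∀ l l', hab l ≤ l' ↔ l ≤ habs l')
    (hpermA : ∀ l, fA (hab l) ≤ ha (fA l))
    (hpermC : ∀ l, fC (ha l) ≤ ha (fC l))
    (hCA : fC (fA H) ≤ H ⊔ T) (haT : ha T = ⊥) (haH : ha H ≤ H) :
    H ≤ habs (fAs (fCs H)) :=
  lying_lemma_general H T fA fAs fC fCs ha hab habs hha hadjA hadjC hadjab hpermA hpermC hCA haT haH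
end
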